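/- arXiv:2208.08194 — 2 statements merged into one kernel-verified Lean document; each statement's English description precedes it below -/
import Mathlib

section
/- Let F be a homogeneous sextic form in ℂ[x₀,x₁,x₂,x₃] admitting a non-redundant decomposition F = Σ_{v∈A} a_v ℓ_v⁶ supported on a projectively distinct finite set A of nonzero vectors of ℂ⁴ which is in general position, with |A| = r ≤ 20. Then for every projectively distinct finite set B of nonzero vectors of ℂ⁴ with |B| < r, the form F does not lie in the ℂ-linear span of {ℓ_w⁶ : w ∈ B}. In particular the Waring rank of F equals r. -/
open MvPolynomial Finset

/-- The linear form `ℓ_v = v₀x₀+v₁x₁+v₂x₂+v₃x₃` associated to a vector `v ∈ ℂ⁴`. -/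
noncomputable def linF (v : Fin 4 → ℂ) : MvPolynomial (Fin 4) ℂ :=
  ∑ i, C (v i) * X i

/-- The ℂ-linear span of `{ℓ_v ^ d : v ∈ S}`. -/
noncomputable def powSpan (S : Finset (Fin 4 → ℂ)) (d : ℕ) :
    Submodule ℂ (MvPolynomial (Fin 4) ℂ) :=
  Submodule.span ℂ ((fun v => linF v ^ d) '' ↑S)

/-- A finite set of nonzero vectors, no two distinct elements of which are proportional. -/
def ProjDistinct (S : Finset (Fin 4 → ℂ)) : Prop :=
  (∀ v ∈ S, v ≠ 0) ∧ ∀ v ∈ S, ∀ w ∈ S, v ≠ w → ∀ c : ℂ, v ≠ c • w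

/-- No element of `A` is proportional to an element of `B`. -/
def ProjDisjoint (A B : Finset (Fin 4 → ℂ)) : Prop :=
  ∀ v ∈ A, ∀ w ∈ B, ∀ c : ℂ, v ≠ c • w

/-- Every element of `A` is proportional to an element of `B` and conversely. -/
def ProjEqual (A B : Finset (Fin 4 → ℂ)) : Prop :=
  (∀ v ∈ A, ∃ w ∈ B, ∃ c : ℂ, v = c • w) ∧ (∀ w ∈ B, ∃ v ∈ A, ∃ c : ℂ, w = c • v)

/-- The Hilbert function `h_S(d) = dim_ℂ span{ℓ_v ^ d : v ∈ S}`. -/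
noncomputable def hS (S : Finset (Fin 4 → ℂ)) (d : ℕ) : ℕ :=
  Module.finrank ℂ (powSpan S d)

/-- First difference `Dh_S(i) = h_S(i) - h_S(i-1)` of the Hilbert function
(with `h_S(-1) = 0`). -/
noncomputable def DhS (S : Finset (Fin 4 → ℂ)) : ℕ → ℕ
  | 0 => hS S 0
  | n + 1 => hS S (n + 1) - hS S n

/-- `A` is in general position: every subset has maximal Hilbert function. -/
def GP (A : Finset (Fin 4 → ℂ)) : Prop :=
  ∀ S ⊆ A, ∀ d : ℕ, hS S d = min S.card (Nat.choose (d + 3) 3)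

/-- `F = Σ_{v ∈ A} a_v ℓ_v ^ 6` with all coefficients nonzero, and `F` is not in the
span of the sixth powers of any proper subset of `A`. -/
def IsNonRedundantDecomp (F : MvPolynomial (Fin 4) ℂ) (A : Finset (Fin 4 → ℂ)) : Prop :=
  ∃ a : (Fin 4 → ℂ) → ℂ, (∀ v ∈ A, a v ≠ 0) ∧
    F = ∑ v ∈ A, a v • linF v ^ 6 ∧
    ∀ A' ⊂ A, F ∉ powSpan A' 6

/-- The Waring rank of a sextic form: the least cardinality of a projectively distinct
set `B` with `F` in the span of `{ℓ_w ^ 6 : w ∈ B}`. -/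
noncomputable def waringRank (F : MvPolynomial (Fin 4) ℂ) : ℕ :=
  sInf {n | ∃ B : Finset (Fin 4 → ℂ), ProjDistinct B ∧ B.card = n ∧ F ∈ powSpan B 6}

/-- The base locus of the cubics through `A` contains no curves: the set of
proportionality classes of nonzero vectors on which every homogeneous cubic vanishing
on `A` vanishes is finite (i.e. covered by finitely many classes). -/
def CubicBaseLocusFinite (A : Finset (Fin 4 → ℂ)) : Prop :=
  ∃ T : Finset (Fin 4 → ℂ), ∀ w : Fin 4 → ℂ, w ≠ 0 →
    (∀ g : MvPolynomial (Fin 4) ℂ, g.IsHomogeneous 3 →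
      (∀ v ∈ A, eval v g = 0) → eval w g = 0) →
    ∃ t ∈ T, ∃ c : ℂ, w = c • t

/-! ### Auxiliary lemmas for `stmt_0` (apolarity argument) -/

lemma pderiv_linF (i : Fin 4) (v : Fin 4 → ℂ) : pderiv i (linF v) = C (v i) := by
  simp [linF, pderiv_X, Pi.single_apply]

lemma pderiv_linF_pow (i : Fin 4) (v : Fin 4 → ℂ) (n : ℕ) :
    pderiv i (linF v ^ (n + 1)) = C ((n + 1 : ℕ) * v i) * linF v ^ n := by
  rw [pderiv_pow, pderiv_linF, ← map_natCast (C : ℂ →+* MvPolynomial (Fin 4) ℂ)]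
  rw [C_mul, Nat.add_sub_cancel]
  ring_nf

lemma trip (i j k : Fin 4) (v : Fin 4 → ℂ) :
    pderiv i (pderiv j (pderiv k (linF v ^ 6))) = C (120 * (v i * v j * v k)) * linF v ^ 3 := by
  have h6 : pderiv k (linF v ^ 6) = C ((6 : ℂ) * v k) * linF v ^ 5 := by
    simpa using pderiv_linF_pow k v 5
  have h5 : pderiv j (linF v ^ 5) = C ((5 : ℂ) * v j) * linF v ^ 4 := by
    simpa using pderiv_linF_pow j v 4
  have h4 : pderiv i (linF v ^ 4) = C ((4 : ℂ) * v i) * linF v ^ 3 := by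
    simpa using pderiv_linF_pow i v 3
  rw [h6, pderiv_C_mul, h5, ← mul_assoc, ← C_mul, pderiv_C_mul, h4, ← mul_assoc, ← C_mul]
  congr 1
  ring

/-- The third-order apolarity operator attached to a dual functional `f`. -/
noncomputable def Phi (f : Module.Dual ℂ (MvPolynomial (Fin 4) ℂ)) :
    MvPolynomial (Fin 4) ℂ →ₗ[ℂ] MvPolynomial (Fin 4) ℂ :=
  ∑ i : Fin 4, ∑ j : Fin 4, ∑ k : Fin 4,
    f (X i * X j * X k) •
      ((pderiv i).toLinearMap ∘ₗ (pderiv j).toLinearMap ∘ₗ (pderiv k).toLinearMap)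

lemma linF_cube (w : Fin 4 → ℂ) :
    linF w ^ 3 = ∑ i : Fin 4, ∑ j : Fin 4, ∑ k : Fin 4,
      (w i * w j * w k) • (X i * X j * X k) := by
  have h3 : linF w ^ 3 = linF w * (linF w * linF w) := by ring
  rw [h3]
  simp only [linF, Finset.sum_mul, Finset.mul_sum, smul_eq_C_mul, C_mul]
  refine Finset.sum_congr rfl fun i _ => Finset.sum_congr rfl fun j _ =>
    Finset.sum_congr rfl fun k _ => by ring

lemma dual_cube (f : Module.Dual ℂ (MvPolynomial (Fin 4) ℂ)) (w : Fin 4 → ℂ) :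
    f (linF w ^ 3) = ∑ i : Fin 4, ∑ j : Fin 4, ∑ k : Fin 4,
      (w i * w j * w k) * f (X i * X j * X k) := by
  rw [linF_cube]
  simp [map_sum, map_smul]

lemma Phi_pow6 (f : Module.Dual ℂ (MvPolynomial (Fin 4) ℂ)) (w : Fin 4 → ℂ) :
    Phi f (linF w ^ 6) = (120 * f (linF w ^ 3)) • linF w ^ 3 := by
  have h : Phi f (linF w ^ 6) = ∑ i : Fin 4, ∑ j : Fin 4, ∑ k : Fin 4,
      (f (X i * X j * X k) * (120 * (w i * w j * w k))) • linF w ^ 3 := by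
    simp only [Phi, LinearMap.sum_apply, LinearMap.smul_apply, LinearMap.comp_apply,
      Derivation.coeFn_coe]
    refine Finset.sum_congr rfl fun i _ => Finset.sum_congr rfl fun j _ =>
      Finset.sum_congr rfl fun k _ => ?_
    rw [trip, smul_eq_C_mul, smul_eq_C_mul, ← mul_assoc, ← C_mul]
  rw [h, dual_cube]
  simp only [← Finset.sum_smul, Finset.mul_sum]
  congr 1
  refine Finset.sum_congr rfl fun i _ => Finset.sum_congr rfl fun j _ =>
    Finset.sum_congr rfl fun k _ => by ring

/-- GP plus `|A| ≤ 20` forces the cubes of the elements of `A` to be independent. -/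
lemma indepA {A : Finset (Fin 4 → ℂ)} (hGP : GP A) (hr : A.card ≤ 20) :
    LinearIndependent ℂ (fun v : {x // x ∈ A} => linF (v : Fin 4 → ℂ) ^ 3) := by
  rw [linearIndependent_iff_card_eq_finrank_span]
  have h := hGP A (subset_refl A) 3
  have hrange : Set.range (fun v : {x // x ∈ A} => linF (v : Fin 4 → ℂ) ^ 3)
      = (fun v => linF v ^ 3) '' ↑A := by
    ext p
    constructor
    · rintro ⟨⟨v, hv⟩, rfl⟩; exact ⟨v, hv, rfl⟩
    · rintro ⟨v, hv, rfl⟩; exact ⟨⟨v, hv⟩, rfl⟩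
  rw [Set.finrank, hrange]
  have h20 : Nat.choose (3 + 3) 3 = 20 := by decide
  rw [hS, powSpan] at h
  rw [h, h20, Fintype.card_coe]
  omega

/-- A non-redundant decomposition of length `r ≤ 20` in general position is
minimal, and `r` is the Waring rank. -/

theorem stmt_0 (F : MvPolynomial (Fin 4) ℂ) (A : Finset (Fin 4 → ℂ)) (r : ℕ)
    (hA : ProjDistinct A) (hGP : GP A) (hcard : A.card = r) (hr : r ≤ 20)
    (hdec : IsNonRedundantDecomp F A) :
    (∀ B : Finset (Fin 4 → ℂ), ProjDistinct B → B.card < r → F ∉ powSpan B 6) ∧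
      waringRank F = r := by
  obtain ⟨a, ha, hFeq, _hnr⟩ := hdec
  have key : ∀ B : Finset (Fin 4 → ℂ), B.card < r → F ∉ powSpan B 6 := by
    intro B hBcard hFB
    haveI : FiniteDimensional ℂ (powSpan B 3) :=
      FiniteDimensional.span_of_finite ℂ ((B.finite_toSet).image _)
    have hA3 : hS A 3 = r := by
      have h := hGP A (subset_refl A) 3
      have h20 : Nat.choose (3 + 3) 3 = 20 := by decide
      rw [h, h20, hcard]
      omega
    have hB3 : Module.finrank ℂ (powSpan B 3) ≤ B.card := by
      have h1 : ((fun v => linF v ^ 3) '' ↑B) = ↑(B.image (fun v => linF v ^ 3)) := by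
        simp [Finset.coe_image]
      rw [powSpan, h1]
      exact le_trans (finrank_span_finset_le_card _) Finset.card_image_le
    have hex : ∃ v0 ∈ A, linF v0 ^ 3 ∉ powSpan B 3 := by
      by_contra hcon
      push_neg at hcon
      have hle : powSpan A 3 ≤ powSpan B 3 := by
        rw [powSpan]
        refine Submodule.span_le.mpr ?_
        rintro p ⟨v, hv, rfl⟩
        exact hcon v hv
      have hmono := Submodule.finrank_mono hle
      have : hS A 3 ≤ Module.finrank ℂ (powSpan B 3) := hmono
      omega
    obtain ⟨v0, hv0A, hv0⟩ := hex
    set U := powSpan B 3 with hU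
    have hq : U.mkQ (linF v0 ^ 3) ≠ 0 := by
      simpa [Submodule.mkQ_apply, Submodule.Quotient.mk_eq_zero] using hv0
    obtain ⟨φ, hφ⟩ : ∃ φ : Module.Dual ℂ (MvPolynomial (Fin 4) ℂ ⧸ U),
        φ (U.mkQ (linF v0 ^ 3)) ≠ 0 := by
      by_contra hcon
      push_neg at hcon
      exact hq ((Module.forall_dual_apply_eq_zero_iff ℂ _).mp hcon)
    set f : Module.Dual ℂ (MvPolynomial (Fin 4) ℂ) := φ ∘ₗ U.mkQ with hf
    have hfB : ∀ w ∈ B, f (linF w ^ 3) = 0 := by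
      intro w hw
      have hmem : linF w ^ 3 ∈ U := Submodule.subset_span ⟨w, hw, rfl⟩
      have : U.mkQ (linF w ^ 3) = 0 := by
        simpa [Submodule.mkQ_apply, Submodule.Quotient.mk_eq_zero] using hmem
      simp [hf, LinearMap.comp_apply, this]
    have hker : powSpan B 6 ≤ LinearMap.ker (Phi f) := by
      rw [powSpan]
      refine Submodule.span_le.mpr ?_
      rintro p ⟨w, hw, rfl⟩
      simp [LinearMap.mem_ker, Phi_pow6, hfB w hw]
    have hPhiF : Phi f F = 0 := hker hFB
    rw [hFeq, map_sum] at hPhiF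
    have hsum : ∑ v ∈ A, (a v * (120 * f (linF v ^ 3))) • linF v ^ 3 = 0 := by
      rw [← hPhiF]
      refine Finset.sum_congr rfl fun v hv => ?_
      rw [map_smul, Phi_pow6, smul_smul]
    have hind := indepA hGP (by omega)
    have hzero : ∑ i : {x // x ∈ A},
        (a (i : Fin 4 → ℂ) * (120 * f (linF (i : Fin 4 → ℂ) ^ 3))) •
          linF (i : Fin 4 → ℂ) ^ 3 = 0 := by
      rw [Finset.univ_eq_attach,
        Finset.sum_attach A (fun v => (a v * (120 * f (linF v ^ 3))) • linF v ^ 3)]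
      exact hsum
    have hcoef := Fintype.linearIndependent_iff.mp hind
      (fun i => a (i : Fin 4 → ℂ) * (120 * f (linF (i : Fin 4 → ℂ) ^ 3))) hzero ⟨v0, hv0A⟩
    have hfv0 : f (linF v0 ^ 3) = 0 := by
      have hav0 := ha v0 hv0A
      have h1 := (mul_eq_zero.mp hcoef).resolve_left hav0
      have h2 := (mul_eq_zero.mp h1).resolve_left (by norm_num : (120 : ℂ) ≠ 0)
      exact h2
    exact hφ (by simpa [hf, LinearMap.comp_apply] using hfv0)
  constructor
  · exact fun B _ hB => key B hB
  · have hmemF : F ∈ powSpan A 6 := by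
      rw [hFeq]
      exact Submodule.sum_smul_mem _ _ fun v hv => Submodule.subset_span ⟨v, hv, rfl⟩
    have hmem : r ∈ {n | ∃ B : Finset (Fin 4 → ℂ),
        ProjDistinct B ∧ B.card = n ∧ F ∈ powSpan B 6} := ⟨A, hA, hcard, hmemF⟩
    unfold waringRank
    refine le_antisymm (Nat.sInf_le hmem) ?_
    obtain ⟨B, _hBpd, hBc, hBF⟩ := Nat.sInf_mem (⟨r, hmem⟩ : Set.Nonempty _)
    by_contra hlt
    push_neg at hlt
    exact key B (by omega) hBF
end

section
/- Let F be a homogeneous sextic form in ℂ[x₀,x₁,x₂,x₃] admitting a non-redundant decomposition F = Σ_{v∈A} a_v ℓ_v⁶ supported on a projectively distinct finite set A of nonzero vectors of ℂ⁴ which is in general position, with |A| = r ≤ 20. Let B be a projectively distinct finite set of nonzero vectors of ℂ⁴ with |B| ≤ r such that F lies in the ℂ-linear span of {ℓ_w⁶ : w ∈ B}. Then every homogeneous polynomial g ∈ R of degree at most 3 that vanishes at all points of A also vanishes at all points of B (that is, the homogeneous ideals of A and of Z = A ∪ B agree in all degrees ≤ 3). -/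
/-!
By apolarity, `ℓ_u ^ n` lies in `span {ℓ_v ^ n : v ∈ S}` iff every form of degree `n` vanishing
on `S` vanishes at `u`: a form `P` of degree `n` gives the functional `apolar P` with
`apolar P (ℓ_v ^ n) = P v`, and conversely every functional restricted to `n`-th powers of linear
forms is evaluation of such a form.

Since `A` is in general position and `|A| ≤ 20 = C(6,3)`, for each `v₀ ∈ A` some cubic `g` vanishes
on `A ∖ {v₀}` but not at `v₀`. If a cubic `h` vanishes on `B`, then `apolar (g h)` kills
`F ∈ span {ℓ_w ^ 6 : w ∈ B}`, while on `F = Σ a_v ℓ_v ^ 6` it equals `a_{v₀} g(v₀) h(v₀)`; so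
`h(v₀) = 0`, i.e. `ℓ_{v₀} ^ 3 ∈ span {ℓ_w ^ 3 : w ∈ B}`. The cubes of `A` are independent and
`|B| ≤ |A|`, so both spans of cubes coincide. Hence every cubic vanishing on `A` vanishes on `B`,
and a form of lower degree is first multiplied by a power of a coordinate not vanishing at `w`.
-/

open MvPolynomial Finset

section Apolarity

variable {σ K : Type*} [Fintype σ] [Field K]

/-- `Q ↦ Σₛ Pₛ Qₛ / multinomial s`: dividing by the multinomial coefficients of `ℓ_v ^ n` is what
makes `apolar P (ℓ_v ^ n) = P v` for `P` homogeneous of degree `n`. -/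
noncomputable def apolar (P : MvPolynomial σ K) : MvPolynomial σ K →ₗ[K] K :=
  ∑ s ∈ P.support, (coeff s P / s.multinomial) • lcoeff K s

theorem apolar_sum_smul_X_pow [CharZero K] {P : MvPolynomial σ K} {n : ℕ}
    (hP : P.IsHomogeneous n) (v : σ → K) :
    apolar P ((∑ i, v i • X i) ^ n) = eval v P := by
  rw [eval_eq, apolar, LinearMap.sum_apply]
  refine Finset.sum_congr rfl fun s hs => ?_
  have hs' : (s.sum fun _ m => m) = n := (hP.degree_eq_sum_deg_support hs).symm
  rw [LinearMap.smul_apply, lcoeff_apply, coeff_linearCombination_X_pow_of_fintype, if_pos hs',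
    smul_eq_mul, Finsupp.prod]
  have : (s.multinomial : K) ≠ 0 := Nat.cast_ne_zero.2 (Nat.multinomial_pos _ _).ne'
  field_simp

variable [DecidableEq σ]

noncomputable def interpolant (n : ℕ) (φ : Module.Dual K (MvPolynomial σ K)) :
    MvPolynomial σ K :=
  ∑ k ∈ piAntidiag univ n, (Nat.multinomial univ k * φ (∏ i, X i ^ k i)) • ∏ i, X i ^ k i

theorem isHomogeneous_interpolant (n : ℕ) (φ : Module.Dual K (MvPolynomial σ K)) :
    (interpolant n φ).IsHomogeneous n := by
  refine IsHomogeneous.sum _ _ _ fun k hk => ?_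
  rw [smul_eq_C_mul, ← (mem_piAntidiag.1 hk).1]
  exact (IsHomogeneous.prod _ _ _ fun i _ => isHomogeneous_X_pow i (k i)).C_mul _

theorem eval_interpolant (n : ℕ) (φ : Module.Dual K (MvPolynomial σ K)) (v : σ → K) :
    eval v (interpolant n φ) = φ ((∑ i, v i • X i) ^ n) := by
  rw [interpolant, sum_pow_eq_sum_piAntidiag, map_sum, map_sum]
  refine Finset.sum_congr rfl fun k _ => ?_
  simp only [smul_eq_C_mul, eval_mul, eval_C, eval_prod, eval_pow, eval_X, mul_pow,
    prod_mul_distrib, ← map_pow, ← map_prod]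
  rw [← map_natCast (C : K →+* MvPolynomial σ K), ← mul_assoc, ← C_mul, C_mul', map_smul,
    smul_eq_mul]
  ring

end Apolarity

theorem linF_eq_sum_smul (v : Fin 4 → ℂ) : linF v = ∑ i, v i • X i := by
  simp only [linF, smul_eq_C_mul]

theorem apolar_linF_pow {P : MvPolynomial (Fin 4) ℂ} {n : ℕ} (hP : P.IsHomogeneous n)
    (v : Fin 4 → ℂ) : apolar P (linF v ^ n) = eval v P := by
  rw [linF_eq_sum_smul, apolar_sum_smul_X_pow hP]

theorem powSpan_le_ker_apolar {S : Finset (Fin 4 → ℂ)} {P : MvPolynomial (Fin 4) ℂ} {n : ℕ}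
    (hP : P.IsHomogeneous n) (hPS : ∀ v ∈ S, eval v P = 0) :
    powSpan S n ≤ LinearMap.ker (apolar P) :=
  Submodule.span_le.2 <| by
    rintro _ ⟨v, hv, rfl⟩
    exact (apolar_linF_pow hP v).trans (hPS v hv)

theorem linF_pow_mem_powSpan_iff {S : Finset (Fin 4 → ℂ)} {n : ℕ} {u : Fin 4 → ℂ} :
    linF u ^ n ∈ powSpan S n ↔ ∀ P : MvPolynomial (Fin 4) ℂ, P.IsHomogeneous n →
      (∀ v ∈ S, eval v P = 0) → eval u P = 0 := by
  refine ⟨fun hu P hP hPS => ?_, fun h => ?_⟩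
  · rw [← apolar_linF_pow hP]
    exact powSpan_le_ker_apolar hP hPS hu
  · by_contra hu
    obtain ⟨φ, hφu, hφS⟩ := Submodule.exists_dual_map_eq_bot_of_notMem hu inferInstance
    refine hφu ?_
    rw [linF_eq_sum_smul, ← eval_interpolant]
    refine h _ (isHomogeneous_interpolant n φ) fun v hv => ?_
    rw [eval_interpolant, ← linF_eq_sum_smul]
    have hv' : linF v ^ n ∈ powSpan S n := Submodule.subset_span ⟨v, hv, rfl⟩
    simpa [hφS] using Submodule.mem_map_of_mem (f := φ) hv'

theorem linF_pow_mem_powSpan_of_sum_mem {A B : Finset (Fin 4 → ℂ)} {a : (Fin 4 → ℂ) → ℂ}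
    {m n : ℕ} {v₀ : Fin 4 → ℂ} (hv₀ : v₀ ∈ A) (ha : a v₀ ≠ 0)
    (hsep : linF v₀ ^ m ∉ powSpan (A.erase v₀) m)
    (hF : ∑ v ∈ A, a v • linF v ^ (m + n) ∈ powSpan B (m + n)) :
    linF v₀ ^ n ∈ powSpan B n := by
  rw [linF_pow_mem_powSpan_iff] at hsep ⊢
  push Not at hsep
  obtain ⟨g, hg, hgA, hgv₀⟩ := hsep
  intro h hh hhB
  have hgh := hg.mul hh
  have hF0 := powSpan_le_ker_apolar hgh (fun w hw => by simp [hhB w hw]) hF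
  rw [LinearMap.mem_ker, map_sum, Finset.sum_eq_single_of_mem v₀ hv₀ fun v hv hne => by
    simp [apolar_linF_pow hgh, hgA v (mem_erase.2 ⟨hne, hv⟩)]] at hF0
  simpa [apolar_linF_pow hgh, ha, hgv₀] using hF0

theorem powSpan_insert_of_mem {S : Finset (Fin 4 → ℂ)} {d : ℕ} {v : Fin 4 → ℂ}
    (hv : linF v ^ d ∈ powSpan S d) : powSpan (insert v S) d = powSpan S d := by
  rw [powSpan, coe_insert, Set.image_insert_eq, Submodule.span_insert_eq_span hv, powSpan]

theorem linF_pow_notMem_powSpan_erase {A : Finset (Fin 4 → ℂ)} (hGP : GP A) {d : ℕ}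
    (hcard : A.card ≤ (d + 3).choose 3) {v : Fin 4 → ℂ} (hv : v ∈ A) :
    linF v ^ d ∉ powSpan (A.erase v) d := by
  intro hmem
  have hspan := powSpan_insert_of_mem hmem
  rw [insert_erase hv] at hspan
  have hA := hGP A subset_rfl d
  have hA' := hGP (A.erase v) (erase_subset v A) d
  rw [hS, hspan] at hA
  rw [hS, card_erase_of_mem hv] at hA'
  have := card_pos.2 ⟨v, hv⟩
  omega

instance (S : Finset (Fin 4 → ℂ)) (d : ℕ) : FiniteDimensional ℂ (powSpan S d) :=
  FiniteDimensional.span_of_finite ℂ (S.finite_toSet.image _)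

theorem hS_le_card (S : Finset (Fin 4 → ℂ)) (d : ℕ) : hS S d ≤ S.card := by
  rw [hS, powSpan, ← coe_image]
  exact (finrank_span_finset_le_card _).trans card_image_le

theorem eval_eq_zero_of_linF_pow_mem_powSpan {S : Finset (Fin 4 → ℂ)} {n e : ℕ}
    {w : Fin 4 → ℂ} (hw : w ≠ 0) (hmem : linF w ^ n ∈ powSpan S n)
    {g : MvPolynomial (Fin 4) ℂ} (hg : g.IsHomogeneous e) (he : e ≤ n)
    (hgS : ∀ v ∈ S, eval v g = 0) : eval w g = 0 := by
  obtain ⟨i, hi⟩ : ∃ i, w i ≠ 0 := Function.ne_iff.1 hw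
  have hpad : (g * X i ^ (n - e)).IsHomogeneous n := by
    simpa [Nat.add_sub_cancel' he] using hg.mul (isHomogeneous_X_pow i (n - e))
  have := linF_pow_mem_powSpan_iff.1 hmem _ hpad fun v hv => by simp [hgS v hv]
  simpa [hi] using this

theorem stmt_2_general (F : MvPolynomial (Fin 4) ℂ) (A : Finset (Fin 4 → ℂ)) (r : ℕ)
    (hGP : GP A) (hcard : A.card = r) (hr : r ≤ 20)
    (hdec : IsNonRedundantDecomp F A)
    (B : Finset (Fin 4 → ℂ)) (hB : ProjDistinct B) (hBcard : B.card ≤ r)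
    (hFB : F ∈ powSpan B 6) :
    ∀ d : ℕ, d ≤ 3 → ∀ g : MvPolynomial (Fin 4) ℂ, g.IsHomogeneous d →
      (∀ v ∈ A, eval v g = 0) → ∀ w ∈ B, eval w g = 0 := by
  obtain ⟨a, ha, rfl, -⟩ := hdec
  have hA20 : A.card ≤ (3 + 3).choose 3 := by rw [hcard]; exact hr
  have hle : powSpan A 3 ≤ powSpan B 3 := Submodule.span_le.2 <| by
    rintro _ ⟨v, hv, rfl⟩
    exact linF_pow_mem_powSpan_of_sum_mem (m := 3) hv (ha v hv)
      (linF_pow_notMem_powSpan_erase hGP hA20 hv) hFB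
  have heq : powSpan A 3 = powSpan B 3 := by
    refine Submodule.eq_of_le_of_finrank_le hle ?_
    calc hS B 3 ≤ B.card := hS_le_card B 3
      _ ≤ A.card := hcard ▸ hBcard
      _ = hS A 3 := by rw [hGP A subset_rfl 3, min_eq_left hA20]
  intro d hd g hg hgA w hw
  exact eval_eq_zero_of_linF_pow_mem_powSpan (hB.1 w hw)
    (heq ▸ Submodule.subset_span ⟨w, hw, rfl⟩) hg hd hgA

/-- The homogeneous ideals of `A` and `Z = A ∪ B` agree in degrees `≤ 3`:
every homogeneous polynomial of degree at most `3` vanishing on `A` vanishes on `B`. -/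
theorem stmt_2 (F : MvPolynomial (Fin 4) ℂ) (A : Finset (Fin 4 → ℂ)) (r : ℕ)
    (hA : ProjDistinct A) (hGP : GP A) (hcard : A.card = r) (hr : r ≤ 20)
    (hdec : IsNonRedundantDecomp F A)
    (B : Finset (Fin 4 → ℂ)) (hB : ProjDistinct B) (hBcard : B.card ≤ r)
    (hFB : F ∈ powSpan B 6) :
    ∀ d : ℕ, d ≤ 3 → ∀ g : MvPolynomial (Fin 4) ℂ, g.IsHomogeneous d →
      (∀ v ∈ A, eval v g = 0) → ∀ w ∈ B, eval w g = 0 :=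
  stmt_2_general F A r hGP hcard hr hdec B hB hBcard hFB
end
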